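/- Let q > 1 be real, D = diag(q, −q⁻¹), and U = ((1/[2]_q, √[3]_q/[2]_q), (−√[3]_q/[2]_q, 1/[2]_q)). Then the matrix M = D·(U·D³·Uᵀ) satisfies M³ = 1 and M ≠ 1; i.e. it has trace −1 and determinant 1, so its eigenvalues are e^{±2πi/3}, the same as for the torus word D·(U·D·Uᵀ). -/

import Mathlib

/-!
`M = D·(U·D³·Uᵀ)` is a `2 × 2` matrix with trace `-1` and determinant `1`, so by Cayley–Hamilton
`M² + M + 1 = 0`, whence `M³ = 1`; and `M ≠ 1` since `tr 1 = 2`. Writing `U` as a rotation with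
entries `c = 1/[2]`, `s = √[3]/[2]`, the identity `[2]² = [3] + 1` gives `c² + s² = 1`, hence
`det M = (det D)⁴ (det U)² = 1`, and `tr M = ((q⁴ + q⁻⁴) − [3](q² + q⁻²))/[2]² = −[2]²/[2]² = −1`.
-/

open Matrix

/-- The quantum integer `[n]_q = (qⁿ − q⁻ⁿ)/(q − q⁻¹)`. -/
noncomputable def qn (q : ℝ) (n : ℤ) : ℝ := (q ^ n - q ^ (-n)) / (q - q⁻¹)

/-- The diagonal R-matrix `D = diag(q, −q⁻¹)`. -/
noncomputable def Dmat (q : ℝ) : Matrix (Fin 2) (Fin 2) ℝ := !![q, 0; 0, -q⁻¹]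

/-- The mixing (Racah) matrix `U`. -/
noncomputable def Umat (q : ℝ) : Matrix (Fin 2) (Fin 2) ℝ :=
  !![1 / qn q 2, Real.sqrt (qn q 3) / qn q 2;
     -Real.sqrt (qn q 3) / qn q 2, 1 / qn q 2]

section QuantumIntegers

variable {q : ℝ}

theorem ne_zero_of_sub_inv_ne_zero (h : q - q⁻¹ ≠ 0) : q ≠ 0 := fun hq => h (by simp [hq])

theorem qn_two (h : q - q⁻¹ ≠ 0) : qn q 2 = q + q⁻¹ := by
  have := ne_zero_of_sub_inv_ne_zero h
  rw [qn, div_eq_iff h]; field_simp; ring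

theorem qn_three (h : q - q⁻¹ ≠ 0) : qn q 3 = q ^ 2 + 1 + q⁻¹ ^ 2 := by
  have := ne_zero_of_sub_inv_ne_zero h
  rw [qn, div_eq_iff h]; field_simp; ring

theorem qn_three_pos (h : q - q⁻¹ ≠ 0) : 0 < qn q 3 := by
  rw [qn_three h]; positivity

theorem qn_two_sq (h : q - q⁻¹ ≠ 0) : qn q 2 ^ 2 = qn q 3 + 1 := by
  have := ne_zero_of_sub_inv_ne_zero h
  rw [qn_two h, qn_three h]; field_simp; ring

theorem qn_two_ne_zero (h : q - q⁻¹ ≠ 0) : qn q 2 ≠ 0 := by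
  intro h2
  have := qn_two_sq h
  rw [h2, zero_pow two_ne_zero] at this
  linarith [qn_three_pos h]

end QuantumIntegers

section TwoByTwo

theorem Matrix.transpose_fin_two_of {α : Type*} (a b c d : α) :
    !![a, b; c, d]ᵀ = !![a, c; b, d] := by
  ext i j; fin_cases i <;> fin_cases j <;> rfl

variable {R : Type*} [CommRing R]

theorem Matrix.pow_three_eq_one_of_trace_eq_neg_one_of_det_eq_one [Nontrivial R]
    {A : Matrix (Fin 2) (Fin 2) R} (htr : A.trace = -1) (hdet : A.det = 1) : A ^ 3 = 1 := by
  have hA : A ^ 2 + A + 1 = 0 := by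
    simpa [charpoly_fin_two, htr, hdet] using aeval_self_charpoly A
  calc A ^ 3 = A ^ 3 - (A - 1) * (A ^ 2 + A + 1) := by rw [hA, mul_zero, sub_zero]
    _ = 1 := by noncomm_ring

theorem Matrix.fin_two_diag_pow (a b : R) (n : ℕ) :
    !![a, 0; 0, b] ^ n = !![a ^ n, 0; 0, b ^ n] := by
  rw [← diagonal_vec2, diagonal_pow, ← diagonal_vec2]
  simp

theorem Matrix.trace_diag_mul_rot_conj_diag (a b a' b' c s : R) :
    (!![a, 0; 0, b] * (!![c, s; -s, c] * !![a', 0; 0, b'] * !![c, s; -s, c]ᵀ)).trace =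
      c ^ 2 * (a * a' + b * b') + s ^ 2 * (a * b' + b * a') := by
  rw [transpose_fin_two_of, mul_fin_two, mul_fin_two, mul_fin_two, trace_fin_two_of]
  ring

theorem Matrix.det_diag_mul_rot_conj_diag (a b a' b' c s : R) :
    (!![a, 0; 0, b] * (!![c, s; -s, c] * !![a', 0; 0, b'] * !![c, s; -s, c]ᵀ)).det =
      a * b * a' * b' * (c ^ 2 + s ^ 2) ^ 2 := by
  simp only [det_mul, det_transpose, det_fin_two_of]
  ring

end TwoByTwo

section RacahMatrix

variable {q : ℝ}

theorem Dmat_pow (n : ℕ) : Dmat q ^ n = !![q ^ n, 0; 0, (-q⁻¹) ^ n] :=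
  fin_two_diag_pow q (-q⁻¹) n

theorem Umat_eq_rot :
    Umat q = !![1 / qn q 2, √(qn q 3) / qn q 2; -(√(qn q 3) / qn q 2), 1 / qn q 2] := by
  rw [Umat, neg_div]

theorem Umat_coeff_sq_add_sq (h : q - q⁻¹ ≠ 0) :
    (1 / qn q 2) ^ 2 + (√(qn q 3) / qn q 2) ^ 2 = 1 := by
  rw [div_pow, div_pow, Real.sq_sqrt (qn_three_pos h).le, one_pow, ← add_div, add_comm,
    ← qn_two_sq h, div_self (pow_ne_zero 2 (qn_two_ne_zero h))]

theorem trace_Dmat_mul_Umat_conj_Dmat_pow_three (h : q - q⁻¹ ≠ 0) :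
    (Dmat q * (Umat q * Dmat q ^ 3 * (Umat q)ᵀ)).trace = -1 := by
  have hq := ne_zero_of_sub_inv_ne_zero h
  rw [Dmat_pow, Umat_eq_rot, Dmat, trace_diag_mul_rot_conj_diag, div_pow, div_pow,
    Real.sq_sqrt (qn_three_pos h).le, qn_two_sq h, qn_three h]
  field_simp
  ring

theorem det_Dmat_mul_Umat_conj_Dmat_pow_three (h : q - q⁻¹ ≠ 0) :
    (Dmat q * (Umat q * Dmat q ^ 3 * (Umat q)ᵀ)).det = 1 := by
  have hq := ne_zero_of_sub_inv_ne_zero h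
  rw [Dmat_pow, Umat_eq_rot, Dmat, det_diag_mul_rot_conj_diag, Umat_coeff_sq_add_sq h]
  field_simp

end RacahMatrix

/-- `M = D·(U·D³·Uᵀ)` satisfies `M³ = 1`, `M ≠ 1`, `trace M = −1`,
`det M = 1` — its eigenvalues are `e^{±2πi/3}`, the same as for `D·(U·D·Uᵀ)`. -/
theorem word_one_three_cube_root (q : ℝ) (hq : 1 < q) :
    (Dmat q * (Umat q * Dmat q ^ 3 * (Umat q)ᵀ)) ^ 3 = 1 ∧
    Dmat q * (Umat q * Dmat q ^ 3 * (Umat q)ᵀ) ≠ 1 ∧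
    (Dmat q * (Umat q * Dmat q ^ 3 * (Umat q)ᵀ)).trace = -1 ∧
    (Dmat q * (Umat q * Dmat q ^ 3 * (Umat q)ᵀ)).det = 1 := by
  have h : q - q⁻¹ ≠ 0 := (sub_pos.2 ((inv_lt_one_of_one_lt₀ hq).trans hq)).ne'
  have htr := trace_Dmat_mul_Umat_conj_Dmat_pow_three h
  have hdet := det_Dmat_mul_Umat_conj_Dmat_pow_three h
  refine ⟨pow_three_eq_one_of_trace_eq_neg_one_of_det_eq_one htr hdet, fun hone => ?_, htr, hdet⟩
  rw [hone, trace_one, Fintype.card_fin] at htr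
  norm_num at htr
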